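/- arXiv:2012.13057 — 2 statements merged into one kernel-verified Lean document; each statement's English description precedes it below -/
import Mathlib

section
/- Let G be a simple graph on a finite vertex type V, let φ : Sym2 V → Fin K assign a class to each edge, let s ≠ g be vertices, and suppose the set Π(s,g) of paths from s to g is nonempty. If a path π ∈ Π(s,g) minimizes the class-count vector θ(π) with respect to the colex order over Π(s,g), then π lies in the optimal path set Π*, i.e., the pair (maxClass(π), θ(π)(maxClass(π))) is minimal in the lexicographic order on pairs over all paths in Π(s,g). -/
open scoped NNReal

/-- The colexicographic strict order on `Fin K → ℕ`. -/
def ColexLt {K : ℕ} (a b : Fin K → ℕ) : Prop :=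
  ∃ k, a k < b k ∧ ∀ j, k < j → a j = b j

/-- The colexicographic order: `a ≤_colex b` iff `a <_colex b` or `a = b`. -/
def ColexLe {K : ℕ} (a b : Fin K → ℕ) : Prop :=
  ColexLt a b ∨ a = b

/-- The class-count vector of a walk: `theta G φ w k` is the number of edges of `w`
(with multiplicity) whose class under `φ` is `k`. -/
def theta {V : Type*} {K : ℕ} (G : SimpleGraph V) (φ : Sym2 V → Fin K)
    {s g : V} (w : G.Walk s g) : Fin K → ℕ :=
  fun k => w.edges.countP (fun e => decide (φ e = k))

/-- The total weight of a walk: the sum of `c` over its edges (with multiplicity). -/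
def weight {V : Type*} (G : SimpleGraph V) (c : Sym2 V → ℝ≥0)
    {s g : V} (w : G.Walk s g) : ℝ≥0 :=
  (w.edges.map c).sum

/-- The largest class `k` with `theta G φ w k > 0`, for a walk with at least one edge. -/
def maxClass {V : Type*} {K : ℕ} (G : SimpleGraph V) (φ : Sym2 V → Fin K)
    {s g : V} (w : G.Walk s g) (hw : w.edges ≠ []) : Fin K :=
  (Finset.univ.filter fun k => 0 < theta G φ w k).max' (by
    obtain ⟨e, he⟩ := List.exists_mem_of_ne_nil w.edges hw
    refine ⟨φ e, ?_⟩
    simp only [Finset.mem_filter, Finset.mem_univ, true_and, theta]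
    exact Finset.mem_filter.mpr ⟨Finset.mem_univ _, List.countP_pos_iff.mpr ⟨e, he, by simp⟩⟩)

/-- A walk between distinct vertices has at least one edge. -/
theorem edges_ne_nil_of_ne {V : Type*} {G : SimpleGraph V} {s g : V}
    (h : s ≠ g) (w : G.Walk s g) : w.edges ≠ [] := by
  cases w with
  | nil => exact absurd rfl h
  | cons h' p => simp

/-- Lexicographic order on pairs `(maxClass, count)`. -/
def PairLe {K : ℕ} (p q : Fin K × ℕ) : Prop :=
  p.1 < q.1 ∨ (p.1 = q.1 ∧ p.2 ≤ q.2)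

/-- Lexicographic order on keys `(class-count vector, weight)`:
first the colex order on the vectors, then the usual order on weights. -/
def KeyLe {K : ℕ} (p q : (Fin K → ℕ) × ℝ≥0) : Prop :=
  ColexLt p.1 q.1 ∨ (p.1 = q.1 ∧ p.2 ≤ q.2)

/-! The colex order on vectors `a : Fin K → ℕ` is monotone in their leading terms `(i, a i)`,
`i` the last index with `a i ≠ 0`, and `(maxClass π, theta π (maxClass π))` is exactly
the leading term of `theta π`; paths play no further role. -/

section LeadingTerm

variable {K : ℕ} {a b : Fin K → ℕ} {i j k : Fin K}

theorem le_of_pos_of_forall_lt_eq_zero (hk : 0 < a k) (ha : ∀ l, i < l → a l = 0) : k ≤ i :=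
  not_lt.mp fun hik => hk.ne' (ha k hik)

theorem pairLe_of_colexLe (hab : ColexLe a b)
    (hai : 0 < a i) (ha : ∀ l, i < l → a l = 0)
    (hbj : 0 < b j) (hb : ∀ l, j < l → b l = 0) :
    PairLe (i, a i) (j, b j) := by
  rcases hab with ⟨k, hlt, hagree⟩ | rfl
  · have hkj : k ≤ j := le_of_pos_of_forall_lt_eq_zero (hlt.trans_le' (Nat.zero_le _)) hb
    have hij : i ≤ j := not_lt.mp fun hji =>
      hai.ne' ((hagree i (hkj.trans_lt hji)).trans (hb i hji))
    rcases hij.lt_or_eq with hij | rfl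
    · exact Or.inl hij
    · refine Or.inr ⟨rfl, ?_⟩
      rcases hkj.lt_or_eq with hki | rfl
      · exact (hagree i hki).le
      · exact hlt.le
  · have hij : i = j := le_antisymm (le_of_pos_of_forall_lt_eq_zero hai hb)
      (le_of_pos_of_forall_lt_eq_zero hbj ha)
    exact Or.inr ⟨hij, hij ▸ le_rfl⟩

end LeadingTerm

section MaxClass

variable {V : Type*} {K : ℕ} (G : SimpleGraph V) (φ : Sym2 V → Fin K)
  {s g : V} (w : G.Walk s g) (hw : w.edges ≠ [])

theorem theta_maxClass_pos : 0 < theta G φ w (maxClass G φ w hw) :=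
  (Finset.mem_filter.mp (Finset.max'_mem (Finset.univ.filter fun k => 0 < theta G φ w k) _)).2

theorem theta_eq_zero_of_maxClass_lt {j : Fin K} (h : maxClass G φ w hw < j) :
    theta G φ w j = 0 :=
  Nat.eq_zero_of_not_pos fun hj =>
    (Finset.le_max' _ j (Finset.mem_filter.mpr ⟨Finset.mem_univ _, hj⟩)).not_gt h

end MaxClass

theorem mem_optimal_set_of_colex_min_general {V : Type*} {K : ℕ}
    (G : SimpleGraph V) (φ : Sym2 V → Fin K) (s g : V) (hsg : s ≠ g)
    (π : G.Walk s g)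
    (hmin : ∀ p : G.Walk s g, p.IsPath → ColexLe (theta G φ π) (theta G φ p)) :
    ∀ p : G.Walk s g, p.IsPath →
      PairLe
        (maxClass G φ π (edges_ne_nil_of_ne hsg π),
          theta G φ π (maxClass G φ π (edges_ne_nil_of_ne hsg π)))
        (maxClass G φ p (edges_ne_nil_of_ne hsg p),
          theta G φ p (maxClass G φ p (edges_ne_nil_of_ne hsg p))) := fun p hp =>
  pairLe_of_colexLe (hmin p hp)
    (theta_maxClass_pos G φ π _) (fun _ => theta_eq_zero_of_maxClass_lt G φ π _)
    (theta_maxClass_pos G φ p _) (fun _ => theta_eq_zero_of_maxClass_lt G φ p _)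

/-- If a path `π` from `s` to `g` minimizes the class-count vector `theta` in the colex
order over all paths from `s` to `g`, then `π` lies in the optimal path set `Π*`: the pair
`(maxClass π, theta π (maxClass π))` is minimal in the lexicographic order over all paths. -/
theorem mem_optimal_set_of_colex_min {V : Type*} [Fintype V] {K : ℕ}
    (G : SimpleGraph V) (φ : Sym2 V → Fin K) (s g : V) (hsg : s ≠ g)
    (hne : ∃ p : G.Walk s g, p.IsPath)
    (π : G.Walk s g) (hπ : π.IsPath)
    (hmin : ∀ p : G.Walk s g, p.IsPath → ColexLe (theta G φ π) (theta G φ p)) :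
    ∀ p : G.Walk s g, p.IsPath →
      PairLe
        (maxClass G φ π (edges_ne_nil_of_ne hsg π),
          theta G φ π (maxClass G φ π (edges_ne_nil_of_ne hsg π)))
        (maxClass G φ p (edges_ne_nil_of_ne hsg p),
          theta G φ p (maxClass G φ p (edges_ne_nil_of_ne hsg p))) :=
  mem_optimal_set_of_colex_min_general G φ s g hsg π hmin
end

section
/- Let G be a simple graph on a finite vertex type V, let φ : Sym2 V → Fin K assign a class to each edge, let c : Sym2 V → ℝ≥0 assign a weight to each edge, and let π* be a path from s to g whose key (θ(π*), weight(π*)) is minimal, with respect to the lexicographic order combining the colex order on class-count vectors and the usual order on weights, among all paths from s to g. Then for every walk w from s to g, the key of π* satisfies (θ(π*), weight(π*)) ≤ (θ(w), weight(w)) in the same lexicographic order. -/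
open scoped NNReal

/-!
Shortcutting a walk to a path (`SimpleGraph.Walk.bypass`) only deletes edges: the edge list of
the bypass is a sub-multiset of that of the walk. Hence every class count and the weight can only
drop, and a pointwise decrease of the class-count vector is a decrease in the colex order. So the
bypass of any walk `w` is a path whose key is at most that of `w`, and the minimal path beats it.
-/

namespace ColexLt

variable {K : ℕ}

theorem trans {a b c : Fin K → ℕ} (hab : ColexLt a b) (hbc : ColexLt b c) : ColexLt a c := by
  obtain ⟨k₁, hk₁, hab⟩ := hab
  obtain ⟨k₂, hk₂, hbc⟩ := hbc
  rcases lt_trichotomy k₁ k₂ with h | rfl | h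
  · exact ⟨k₂, hab k₂ h ▸ hk₂, fun j hj => (hab j (h.trans hj)).trans (hbc j hj)⟩
  · exact ⟨k₁, hk₁.trans hk₂, fun j hj => (hab j hj).trans (hbc j hj)⟩
  · exact ⟨k₁, hbc k₁ h ▸ hk₁, fun j hj => (hab j hj).trans (hbc j (h.trans hj))⟩

/-- The witness is the largest coordinate in which `a` and `b` differ. -/
theorem of_le_of_ne {a b : Fin K → ℕ} (hle : a ≤ b) (hne : a ≠ b) : ColexLt a b := by
  have hdiff : (Finset.univ.filter fun k => a k ≠ b k).Nonempty := by
    obtain ⟨k, hk⟩ := Function.ne_iff.mp hne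
    exact ⟨k, Finset.mem_filter.mpr ⟨Finset.mem_univ k, hk⟩⟩
  obtain ⟨k, hk, hmax⟩ := Finset.exists_max_image _ id hdiff
  refine ⟨k, (hle k).lt_of_ne (Finset.mem_filter.mp hk).2, fun j hkj => ?_⟩
  by_contra hj
  exact (hmax j (Finset.mem_filter.mpr ⟨Finset.mem_univ j, hj⟩)).not_gt hkj

end ColexLt

namespace KeyLe

variable {K : ℕ}

theorem trans {p q r : (Fin K → ℕ) × ℝ≥0} (hpq : KeyLe p q) (hqr : KeyLe q r) :
    KeyLe p r := by
  rcases hpq with hpq | ⟨hpq, hpq'⟩ <;> rcases hqr with hqr | ⟨hqr, hqr'⟩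
  · exact .inl (hpq.trans hqr)
  · exact .inl (hqr ▸ hpq)
  · exact .inl (hpq ▸ hqr)
  · exact .inr ⟨hpq.trans hqr, hpq'.trans hqr'⟩

theorem of_le {p q : (Fin K → ℕ) × ℝ≥0} (h : p ≤ q) : KeyLe p q := by
  by_cases heq : p.1 = q.1
  · exact .inr ⟨heq, h.2⟩
  · exact .inl (ColexLt.of_le_of_ne h.1 heq)

end KeyLe

section Walks

variable {V : Type*} {G : SimpleGraph V} {s g u v : V}

theorem theta_le_of_edges_subperm {K : ℕ} (φ : Sym2 V → Fin K) {w : G.Walk s g}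
    {w' : G.Walk u v} (h : w'.edges.Subperm w.edges) : theta G φ w' ≤ theta G φ w :=
  fun _ => h.countP_le _

theorem weight_le_of_edges_subperm (c : Sym2 V → ℝ≥0) {w : G.Walk s g} {w' : G.Walk u v}
    (h : w'.edges.Subperm w.edges) : weight G c w' ≤ weight G c w := by
  obtain ⟨l, hperm, hsub⟩ := h
  calc weight G c w' = (l.map c).sum := ((hperm.map c).sum_eq).symm
    _ ≤ weight G c w := (hsub.map c).sum_le_sum fun _ _ => zero_le

theorem SimpleGraph.Walk.edges_bypass_subperm [DecidableEq V] (w : G.Walk s g) :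
    w.bypass.edges.Subperm w.edges :=
  w.bypass_isPath.edges_nodup.subperm w.edges_bypass_subset_edges

theorem keyLe_bypass [DecidableEq V] {K : ℕ} (φ : Sym2 V → Fin K) (c : Sym2 V → ℝ≥0)
    (w : G.Walk s g) :
    KeyLe (theta G φ w.bypass, weight G c w.bypass) (theta G φ w, weight G c w) :=
  KeyLe.of_le ⟨theta_le_of_edges_subperm φ w.edges_bypass_subperm,
    weight_le_of_edges_subperm c w.edges_bypass_subperm⟩

end Walks

theorem key_min_over_paths_implies_over_walks_general {V : Type*} {K : ℕ}
    (G : SimpleGraph V) (φ : Sym2 V → Fin K) (c : Sym2 V → ℝ≥0) {s g : V}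
    (π : G.Walk s g)
    (hmin : ∀ p : G.Walk s g, p.IsPath →
      KeyLe (theta G φ π, weight G c π) (theta G φ p, weight G c p)) :
    ∀ w : G.Walk s g,
      KeyLe (theta G φ π, weight G c π) (theta G φ w, weight G c w) := by
  classical
  exact fun w => (hmin w.bypass w.bypass_isPath).trans (keyLe_bypass φ c w)

/-- If a path `π*` from `s` to `g` is key-minimal (key = `(theta, weight)` compared
lexicographically, colex on vectors first, then weight) among all paths from `s` to `g`,
then it is key-minimal among all walks from `s` to `g`. -/
theorem key_min_over_paths_implies_over_walks {V : Type*} [Fintype V] {K : ℕ}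
    (G : SimpleGraph V) (φ : Sym2 V → Fin K) (c : Sym2 V → ℝ≥0) {s g : V}
    (π : G.Walk s g) (hπ : π.IsPath)
    (hmin : ∀ p : G.Walk s g, p.IsPath →
      KeyLe (theta G φ π, weight G c π) (theta G φ p, weight G c p)) :
    ∀ w : G.Walk s g,
      KeyLe (theta G φ π, weight G c π) (theta G φ w, weight G c w) :=
  key_min_over_paths_implies_over_walks_general G φ c π hmin
end
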